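/- arXiv:1811.04799 — 4 statements merged into one kernel-verified Lean document; each statement's English description precedes it below -/
import Mathlib

section
/- For all integers $a \ge 0$ and odd $n \ge 1$, the integer $C(a+1, a, n, -2) := \sum_{r=0}^{a+1} \binom{n-a}{r}\binom{a}{a+1-r}(-2)^r$ is congruent to $2(n-a)$ modulo $4$; in particular its $2$-adic valuation equals $1$ when $a$ is even and is at least $2$ when $a$ is odd. -/
theorem stmt6 (a n : ℕ) (hn : Odd n) (hn1 : 1 ≤ n) :
    (∑ r ∈ Finset.range (a + 2),
        Ring.choose ((n : ℤ) - a) r * (a.choose (a + 1 - r) : ℤ) * (-2) ^ r)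
      ≡ 2 * ((n : ℤ) - a) [ZMOD 4] ∧
    (Even a →
      (2 : ℤ) ∣ (∑ r ∈ Finset.range (a + 2),
          Ring.choose ((n : ℤ) - a) r * (a.choose (a + 1 - r) : ℤ) * (-2) ^ r) ∧
      ¬ (4 : ℤ) ∣ (∑ r ∈ Finset.range (a + 2),
          Ring.choose ((n : ℤ) - a) r * (a.choose (a + 1 - r) : ℤ) * (-2) ^ r)) ∧
    (Odd a →
      (4 : ℤ) ∣ (∑ r ∈ Finset.range (a + 2),
          Ring.choose ((n : ℤ) - a) r * (a.choose (a + 1 - r) : ℤ) * (-2) ^ r)) := by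
  set x : ℤ := (n : ℤ) - a with hx
  set S : ℤ := ∑ r ∈ Finset.range (a + 2),
      Ring.choose ((n : ℤ) - a) r * (a.choose (a + 1 - r) : ℤ) * (-2) ^ r with hS
  have hsum : (4 : ℤ) ∣ S - (-2 * x) := by
    have hg : -2 * x = ∑ r ∈ Finset.range (a + 2), (if r = 1 then -2 * x else 0) := by
      rw [Finset.sum_ite_eq' (Finset.range (a+2)) 1 (fun _ => -2 * x)]
      simp
    rw [hg, hS, ← Finset.sum_sub_distrib]
    apply Finset.dvd_sum
    intro r hr
    match r with
    | 0 => simp [Nat.choose_succ_self]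
    | 1 =>
      have h0 : Ring.choose ((n : ℤ) - a) 1 * (a.choose (a + 1 - 1) : ℤ) * (-2) ^ 1
          - (if 1 = 1 then -2 * x else 0) = 0 := by
        rw [if_pos rfl]
        simp only [Ring.choose_one_right, hx, Nat.add_sub_cancel, Nat.choose_self,
          Nat.cast_one]
        ring
      rw [h0]
      exact dvd_zero 4
    | (k+2) =>
      simp only [if_neg (by omega : k + 2 ≠ 1), sub_zero]
      exact dvd_mul_of_dvd_right ⟨(-2)^k, by ring⟩ _
  have hmain : S ≡ 2 * x [ZMOD 4] := by
    have h1 : S ≡ -2 * x [ZMOD 4] := (Int.modEq_iff_dvd.mpr hsum).symm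
    have h2 : (-2 : ℤ) * x ≡ 2 * x [ZMOD 4] := Int.modEq_iff_dvd.mpr ⟨x, by ring⟩
    exact h1.trans h2
  refine ⟨hmain, ?_, ?_⟩
  · intro ha
    obtain ⟨k, hk⟩ := hn
    obtain ⟨m, hm⟩ := ha
    have hxo : x = 2 * ((k : ℤ) - m) + 1 := by rw [hx, hk, hm]; push_cast; ring
    obtain ⟨c, hc⟩ := (Int.modEq_iff_dvd.mp hmain)
    constructor
    · exact ⟨x - 2 * c, by linarith⟩
    · intro ⟨d, hd⟩
      omega
  · intro ha
    obtain ⟨k, hk⟩ := hn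
    obtain ⟨m, hm⟩ := ha
    have hxo : x = 2 * ((k : ℤ) - m) := by rw [hx, hk, hm]; push_cast; ring
    obtain ⟨c, hc⟩ := (Int.modEq_iff_dvd.mp hmain)
    exact ⟨(k : ℤ) - m - c, by rw [hxo] at hc; linarith⟩
end

section
/- For all integers $a \ge 0$ and $m \ge 0$, setting $n = 2m+1$, the integer $C(a,a,n,-2) := \sum_{r=0}^{a} \binom{n-a}{r}\binom{a}{a-r}(-2)^r$ satisfies $C(a,a,2m+1,-2) \equiv (-3)^m \pmod 4$. -/
theorem stmt7 (a m : ℕ) :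
    (∑ r ∈ Finset.range (a + 1),
        Ring.choose ((2 * m + 1 : ℤ) - a) r * (a.choose (a - r) : ℤ) * (-2) ^ r)
      ≡ (-3) ^ m [ZMOD 4] := by
  rw [show (4:ℤ) = ((4:ℕ):ℤ) by norm_num, ← ZMod.intCast_eq_intCast_iff]
  push_cast
  have h4 : (4 : ZMod 4) = 0 := by decide
  have h3 : ((-3 : ZMod 4)) ^ m = 1 := by
    have : (-3 : ZMod 4) = 1 := by decide
    rw [this, one_pow]
  rw [h3]
  match a with
  | 0 => simp
  | 1 =>
      rw [Finset.sum_range_succ, Finset.sum_range_one]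
      simp [Ring.choose_zero_right, Ring.choose_one_right]
      ring_nf
      simp [h4]
  | (k+2) =>
      rw [Finset.sum_range_succ', Finset.sum_range_succ']
      rw [Finset.sum_eq_zero (fun i _ => by
        have he : ((-2 : ZMod 4)) ^ (i+1+1) = 0 := by
          rw [show i+1+1 = i+2 by ring, pow_add,
            show ((-2 : ZMod 4)) ^ 2 = 0 by decide, mul_zero]
        rw [he, mul_zero])]
      simp only [zero_add, pow_zero, pow_one, Ring.choose_zero_right,
        Ring.choose_one_right, Nat.choose_self, Nat.sub_zero, Nat.cast_one]
      rw [show k + 2 - 1 = k + 1 by omega, Nat.choose_succ_self_right]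
      push_cast
      rcases Nat.even_or_odd k with ⟨t, ht⟩ | ⟨t, ht⟩ <;> subst ht <;> push_cast
      · linear_combination (-2*(m:ZMod 4)*t - 2*(m:ZMod 4) + 2*(t:ZMod 4)^2 + 3*t + 1) * h4
      · linear_combination (-((m:ZMod 4) - t - 1) * (2*t+3)) * h4
end

section
/- Let $n_1 = 2m_1+1$ and $n_2 = 2m_2+1$ be odd positive integers and let $a, b \ge 0$ be integers. Then the integer $T := C(a,a,n_1,-2)\,C(b,b,n_2,-2) + (-1)^{a+b+1}(-3)^{m_1+m_2}$ satisfies: the $2$-adic valuation of $T$ equals $1$ if $a + b$ is odd, and is at least $2$ (with $T$ possibly zero) if $a+b$ is even. -/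
lemma key8 (a : ℕ) (n : ℤ) (hn : Odd n) :
    (∑ r ∈ Finset.range (a + 1),
        Ring.choose (n - a) r * (a.choose (a - r) : ℤ) * (-2) ^ r) ≡ 1 [ZMOD 4] := by
  cases a with
  | zero => simp [Ring.choose_zero_right]
  | succ a' =>
    set A : ℤ := ((a' : ℤ) + 1) with hA
    have hsplit : (∑ r ∈ Finset.range (a' + 1 + 1),
        Ring.choose (n - (a' + 1 : ℕ)) r * ((a' + 1).choose (a' + 1 - r) : ℤ) * (-2) ^ r)
        = (∑ r ∈ Finset.range a',
            Ring.choose (n - (a' + 1 : ℕ)) (r + 2) * ((a' + 1).choose (a' + 1 - (r + 2)) : ℤ)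
              * (-2) ^ (r + 2))
          + Ring.choose (n - (a' + 1 : ℕ)) 1 * ((a' + 1).choose (a' + 1 - 1) : ℤ) * (-2) ^ 1
          + Ring.choose (n - (a' + 1 : ℕ)) 0 * ((a' + 1).choose (a' + 1 - 0) : ℤ) * (-2) ^ 0 := by
      rw [Finset.sum_range_succ' _ (a' + 1), Finset.sum_range_succ' _ a']
    rw [hsplit]
    have h0 : Ring.choose (n - (a' + 1 : ℕ)) 0 * ((a' + 1).choose (a' + 1 - 0) : ℤ) * (-2) ^ 0
        = 1 := by
      simp [Ring.choose_zero_right]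
    have h1 : (4 : ℤ) ∣ Ring.choose (n - (a' + 1 : ℕ)) 1 * ((a' + 1).choose (a' + 1 - 1) : ℤ)
        * (-2) ^ 1 := by
      rw [Ring.choose_one_right]
      have hc : ((a' + 1).choose (a' + 1 - 1) : ℤ) = (a' : ℤ) + 1 := by
        simp
      rw [hc]
      have h2 : (2 : ℤ) ∣ (n - (a' + 1 : ℕ)) * ((a' : ℤ) + 1) := by
        rcases Int.even_or_odd ((a' : ℤ) + 1) with he | ho
        · exact Dvd.dvd.mul_left he.two_dvd _
        · have : Even (n - (a' + 1 : ℕ)) := by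
            push_cast
            exact hn.sub_odd ho
          exact Dvd.dvd.mul_right this.two_dvd _
      obtain ⟨k, hk⟩ := h2
      refine ⟨-k, ?_⟩
      rw [hk]; ring
    have hs : (4 : ℤ) ∣ ∑ r ∈ Finset.range a',
        Ring.choose (n - (a' + 1 : ℕ)) (r + 2) * ((a' + 1).choose (a' + 1 - (r + 2)) : ℤ)
          * (-2) ^ (r + 2) := by
      refine Finset.dvd_sum fun r _ => ⟨Ring.choose (n - (a' + 1 : ℕ)) (r + 2)
        * ((a' + 1).choose (a' + 1 - (r + 2)) : ℤ) * (-2) ^ r, ?_⟩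
      ring
    rw [h0]
    set S : ℤ := ∑ r ∈ Finset.range a',
        Ring.choose (n - (a' + 1 : ℕ)) (r + 2) * ((a' + 1).choose (a' + 1 - (r + 2)) : ℤ)
          * (-2) ^ (r + 2) with hS
    set t1 : ℤ := Ring.choose (n - (a' + 1 : ℕ)) 1 * ((a' + 1).choose (a' + 1 - 1) : ℤ) * (-2) ^ 1
      with ht1
    obtain ⟨k, hk⟩ := dvd_add hs h1
    refine (Int.modEq_iff_dvd.mpr ⟨-k, ?_⟩)
    have : S + t1 = 4 * k := hk
    linarith

theorem stmt8 (m₁ m₂ a b : ℕ)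
    (C : ℕ → ℕ → ℤ)
    (hC : ∀ i n, C i n = ∑ r ∈ Finset.range (i + 1),
        Ring.choose ((n : ℤ) - i) r * (i.choose (i - r) : ℤ) * (-2) ^ r)
    (T : ℤ)
    (hT : T = C a (2 * m₁ + 1) * C b (2 * m₂ + 1) +
        (-1) ^ (a + b + 1) * (-3) ^ (m₁ + m₂)) :
    (Odd (a + b) → (2 : ℤ) ∣ T ∧ ¬ (4 : ℤ) ∣ T) ∧
    (Even (a + b) → (4 : ℤ) ∣ T) := by
  have hn1 : Odd (((2 * m₁ + 1 : ℕ) : ℤ)) := by push_cast; exact ⟨m₁, by ring⟩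
  have hn2 : Odd (((2 * m₂ + 1 : ℕ) : ℤ)) := by push_cast; exact ⟨m₂, by ring⟩
  have hx : C a (2 * m₁ + 1) ≡ 1 [ZMOD 4] := by rw [hC]; exact key8 a _ hn1
  have hy : C b (2 * m₂ + 1) ≡ 1 [ZMOD 4] := by rw [hC]; exact key8 b _ hn2
  have hxy : C a (2 * m₁ + 1) * C b (2 * m₂ + 1) ≡ 1 [ZMOD 4] := by
    simpa using hx.mul hy
  have h3 : ((-3 : ℤ)) ^ (m₁ + m₂) ≡ 1 [ZMOD 4] := by
    calc ((-3 : ℤ)) ^ (m₁ + m₂) ≡ 1 ^ (m₁ + m₂) [ZMOD 4] :=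
          (Int.ModEq.pow _ (by decide))
      _ = 1 := one_pow _
  constructor
  · intro hodd
    have hpow : ((-1 : ℤ)) ^ (a + b + 1) = 1 := Even.neg_one_pow hodd.add_one
    have hT4 : T ≡ 2 [ZMOD 4] := by
      rw [hT, hpow, one_mul]
      calc C a (2 * m₁ + 1) * C b (2 * m₂ + 1) + (-3 : ℤ) ^ (m₁ + m₂)
          ≡ 1 + 1 [ZMOD 4] := hxy.add h3
        _ = 2 := by norm_num
    have hd : (4 : ℤ) ∣ T - 2 := (Int.ModEq.dvd hT4.symm)
    constructor
    · have : (2 : ℤ) ∣ T - 2 := dvd_trans (by norm_num) hd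
      simpa using dvd_add this (dvd_refl (2 : ℤ))
    · intro h4
      have : (4 : ℤ) ∣ (2 : ℤ) := by
        have := dvd_sub h4 hd
        simpa using this
      norm_num at this
  · intro heven
    have hpow : ((-1 : ℤ)) ^ (a + b + 1) = -1 := Odd.neg_one_pow heven.add_one
    have hT4 : T ≡ 0 [ZMOD 4] := by
      rw [hT, hpow]
      calc C a (2 * m₁ + 1) * C b (2 * m₂ + 1) + (-1) * (-3 : ℤ) ^ (m₁ + m₂)
          ≡ 1 + (-1) * 1 [ZMOD 4] := hxy.add ((Int.ModEq.refl (-1)).mul h3)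
        _ = 0 := by norm_num
    simpa using (Int.modEq_zero_iff_dvd).mp hT4
end

section
/- Define $g(x,y,n)$ for integers $x, y, n \ge 0$ by: $g(x,y,n) = +\infty$ if $x > n \ge y$; otherwise $g(x,y,n) = x$ if $y = 0$, $g(x,y,n) = 0$ if $y \ge x$, and $g(x,y,n) = x - y$ if $0 < y < x$. Then for any integer $t$ with $2$-adic valuation $v_2(t) \ge 1$, the integer $C(x,y,n,t) = \sum_{r=0}^{x} \binom{n-y}{r}\binom{y}{x-r} t^r$ satisfies $v_2(C(x,y,n,t)) \ge g(x,y,n)$ (with the convention that $v_2(0) = +\infty$, and where in the case $x > n \ge y$ one in fact has $C(x,y,n,t) = 0$). -/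
/-- The finite part of the function `g(x,y,n)` from the paper:
`g(x,y,n) = x` if `y = 0`, `0` if `y ≥ x`, and `x - y` if `0 < y < x`
(the case `x > n ≥ y`, where `g = +∞`, is handled separately). -/
def gfin (x y : ℕ) : ℕ := if y = 0 then x else if x ≤ y then 0 else x - y

theorem stmt18 (x y n : ℕ) (t : ℤ) (ht : 2 ∣ t) :
    (n < x → y ≤ n →
      (∑ r ∈ Finset.range (x + 1),
        Ring.choose ((n : ℤ) - y) r * (y.choose (x - r) : ℤ) * t ^ r) = 0) ∧
    (2 : ℤ) ^ gfin x y ∣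
      ∑ r ∈ Finset.range (x + 1),
        Ring.choose ((n : ℤ) - y) r * (y.choose (x - r) : ℤ) * t ^ r := by
  constructor
  · intro hnx hyn
    apply Finset.sum_eq_zero
    intro r hr
    have hcast : ((n : ℤ) - y) = ((n - y : ℕ) : ℤ) := by
      push_cast [hyn]; ring
    rw [hcast, Ring.choose_natCast]
    rcases le_or_gt r (n - y) with h | h
    · have : y < x - r := by omega
      rw [Nat.choose_eq_zero_of_lt this]
      simp
    · rw [Nat.choose_eq_zero_of_lt h]
      simp
  · unfold gfin
    split_ifs with h0 hxy
    · -- y = 0 : only r = x survives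
      subst h0
      apply Finset.dvd_sum
      intro r hr
      rcases eq_or_lt_of_le (Nat.lt_succ_iff.mp (Finset.mem_range.mp hr)) with h | h
      · subst h
        exact Dvd.dvd.mul_left (pow_dvd_pow_of_dvd ht r) _
      · rw [Nat.choose_eq_zero_of_lt (by omega)]
        simp
    · simp
    · apply Finset.dvd_sum
      intro r hr
      rcases lt_or_ge r (x - y) with h | h
      · rw [Nat.choose_eq_zero_of_lt (by omega)]
        simp
      · exact Dvd.dvd.mul_left (dvd_trans (pow_dvd_pow 2 h) (pow_dvd_pow_of_dvd ht r)) _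
end
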